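/- If an OWA mechanism's weights are not all equal to 1/n, then it violates proportionality: there exists j ∈ {1,...,n−1} with ∑_{j'=1}^{j} w_{j'} ≠ j/n, and on the profile with j agents at 0 and n−j agents at 1 the output 1 − ∑_{j'=1}^{j} w_{j'} differs from (n−j)/n. -/

import Mathlib

/-!
A threshold profile `0, …, 0, 1, …, 1` is already sorted, so its OWA value is the total weight
minus a prefix sum of the weights. If every proper prefix sum of `j` weights were `j / n`, the
consecutive differences of prefix sums would force every weight to be `1 / n`.
-/

noncomputable def owa {n : ℕ} (w x : Fin n → ℝ) : ℝ :=
  ∑ j, w j * x (Tuple.sort x j)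

open Finset

lemma owa_of_monotone {n : ℕ} (w x : Fin n → ℝ) (hx : Monotone x) :
    owa w x = ∑ j, w j * x j := by
  have hsort : x ∘ Tuple.sort x = x :=
    ((Tuple.comp_sort_eq_comp_iff_monotone (σ := Equiv.refl (Fin n))).mpr hx).symm
  exact sum_congr rfl fun j _ => by rw [← congrFun hsort j, Function.comp_apply]

def prefixSum {n : ℕ} (w : Fin n → ℝ) (j : ℕ) : ℝ :=
  ∑ k ∈ univ.filter (fun k : Fin n => (k : ℕ) < j), w k

section PrefixSum

variable {n : ℕ} (w : Fin n → ℝ)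

@[simp]
lemma prefixSum_zero : prefixSum w 0 = 0 := by
  simp [prefixSum]

lemma prefixSum_of_le {j : ℕ} (hj : n ≤ j) : prefixSum w j = ∑ k, w k := by
  unfold prefixSum
  rw [filter_true_of_mem fun k _ => k.isLt.trans_le hj]

lemma prefixSum_succ (i : Fin n) : prefixSum w (i + 1) = prefixSum w i + w i := by
  have hfilter : univ.filter (fun k : Fin n => (k : ℕ) < i + 1) =
      insert i (univ.filter (fun k : Fin n => (k : ℕ) < i)) := by
    ext k
    simp only [mem_filter, mem_univ, true_and, mem_insert, Fin.ext_iff]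
    omega
  rw [prefixSum, hfilter, sum_insert (by simp), add_comm]
  rfl

lemma eq_of_prefixSum_eq_mul {c : ℝ} (h : ∀ j ≤ n, prefixSum w j = j * c) (i : Fin n) :
    w i = c := by
  have hstep := prefixSum_succ w i
  rw [h (i + 1) i.isLt, h i i.isLt.le] at hstep
  push_cast at hstep
  linarith

lemma owa_threshold (j : ℕ) :
    owa w (fun k => if (k : ℕ) < j then 0 else 1) = ∑ k, w k - prefixSum w j := by
  have hmono : Monotone (fun k : Fin n => if (k : ℕ) < j then (0 : ℝ) else 1) := by
    intro a b (hab : (a : ℕ) ≤ b)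
    dsimp only
    split_ifs <;> first | omega | norm_num
  rw [owa_of_monotone w _ hmono, eq_sub_iff_add_eq, prefixSum]
  simp only [mul_ite, mul_zero, mul_one, sum_ite, sum_const_zero, zero_add]
  exact sum_filter_not_add_sum_filter univ _ w

end PrefixSum

theorem owa_not_average_violates_proportionality_general {n : ℕ}
    (w : Fin n → ℝ) (hsum : ∑ j, w j = 1)
    (h : ¬ ∀ j, w j = 1 / n) :
    ∃ j : ℕ, 1 ≤ j ∧ j ≤ n - 1 ∧
      (∑ j' ∈ Finset.univ.filter (fun j' : Fin n => (j' : ℕ) < j), w j') ≠ (j : ℝ) / n ∧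
      owa w (fun k => if (k : ℕ) < j then 0 else 1) =
        1 - ∑ j' ∈ Finset.univ.filter (fun j' : Fin n => (j' : ℕ) < j), w j' ∧
      owa w (fun k => if (k : ℕ) < j then 0 else 1) ≠ ((n : ℝ) - j) / n := by
  obtain ⟨j, hj1, hjn, hj⟩ : ∃ j : ℕ, 1 ≤ j ∧ j ≤ n - 1 ∧ prefixSum w j ≠ j / n := by
    by_contra! hc
    refine h (eq_of_prefixSum_eq_mul w fun j hj => ?_)
    rw [← div_eq_mul_one_div]
    rcases Nat.eq_zero_or_pos j with rfl | hj0
    · simp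
    rcases hj.lt_or_eq with hjn | rfl
    · exact hc j hj0 (by omega)
    · rw [prefixSum_of_le w le_rfl, hsum, div_self (Nat.cast_ne_zero.mpr hj0.ne')]
  have hn : (n : ℝ) ≠ 0 := Nat.cast_ne_zero.mpr (by omega)
  have howa := owa_threshold w j
  rw [hsum] at howa
  refine ⟨j, hj1, hjn, hj, howa, ?_⟩
  rwa [howa, sub_div, div_self hn, Ne, sub_right_inj]

theorem owa_not_average_violates_proportionality {n : ℕ} (hn : 1 ≤ n)
    (w : Fin n → ℝ) (hw : ∀ j, w j ∈ Set.Icc (0:ℝ) 1) (hsum : ∑ j, w j = 1)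
    (h : ¬ ∀ j, w j = 1 / n) :
    ∃ j : ℕ, 1 ≤ j ∧ j ≤ n - 1 ∧
      (∑ j' ∈ Finset.univ.filter (fun j' : Fin n => (j' : ℕ) < j), w j') ≠ (j : ℝ) / n ∧
      owa w (fun k => if (k : ℕ) < j then 0 else 1) =
        1 - ∑ j' ∈ Finset.univ.filter (fun j' : Fin n => (j' : ℕ) < j), w j' ∧
      owa w (fun k => if (k : ℕ) < j then 0 else 1) ≠ ((n : ℝ) - j) / n :=
  owa_not_average_violates_proportionality_general w hsum h
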